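/- Let G be a Δ-critical graph and let uv be an edge of G with d(u) + d(v) = Δ + 2. Then every vertex of N(N({u,v})) \ {u,v} has degree at least Δ − 1. -/

import Mathlib

open SimpleGraph Finset

variable {V : Type*}

/-- `G` has a `K₅` minor: five pairwise disjoint nonempty connected branch sets,
pairwise joined by an edge of `G`. -/
def SimpleGraph.HasK5Minor (G : SimpleGraph V) : Prop :=
  ∃ S : Fin 5 → Set V,
    (∀ i, (S i).Nonempty) ∧
    (∀ i, (G.induce (S i)).Connected) ∧
    (∀ i j, i ≠ j → Disjoint (S i) (S j)) ∧
    (∀ i j, i ≠ j → ∃ u ∈ S i, ∃ v ∈ S j, G.Adj u v)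

/-- The chromatic index of `G`, as the chromatic number of its line graph. -/
noncomputable def SimpleGraph.chromaticIndex (G : SimpleGraph V) : ℕ∞ :=
  G.lineGraph.chromaticNumber

/-- `G` is a `Δ`-critical graph (`Δ = G.maxDegree`): it is connected and class 2,
and deleting any edge decreases the chromatic index. -/
def SimpleGraph.IsDeltaCritical [Fintype V] (G : SimpleGraph V) [DecidableRel G.Adj] : Prop :=
  G.Connected ∧ G.chromaticIndex = (G.maxDegree : ℕ∞) + 1 ∧
    ∀ e ∈ G.edgeSet, (G.deleteEdges {e}).chromaticIndex < G.chromaticIndex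

/-- The neighborhood `N(X)` of a set of vertices `X`. -/
def SimpleGraph.setNbhd (G : SimpleGraph V) (X : Set V) : Set V :=
  {v | v ∉ X ∧ ∃ u ∈ X, G.Adj u v}

/-!
Let `H = G - uv` and let `φ` be a `Δ`-edge-colouring of `H`, which exists by criticality. No
colour is missing at both `u` and `v`, since `φ` would extend to `G`; as `d(u) + d(v) = Δ + 2`,
counting shows that every colour is missing at exactly one of them. If `a` is missing at `u` and
`b` at `v`, the `(a, b)`-Kempe chain from `u` ends at `v`, for otherwise swapping it would create
a common missing colour. Kempe graphs have maximum degree two, so a vertex `z ∉ {u, v}` missing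
`a` or `b` lies on another chain, and swapping that chain changes the colour missing at `z`
without touching `u` or `v`.

Now let `z` be joined to `u` through `w`, and write `β = φ(uw)`. A few such swaps turn any two
colours missing at `z` into a colouring where `z` misses `β` while `wz` has a colour `a` missing
at `u`; then `u w z` lies on the `(a, β)`-chain from `u`, which is impossible. So `z` misses at
most one colour, that is, `d(z) ≥ Δ - 1`.
-/

namespace SimpleGraph

section MaxDegreeTwo

variable {D : SimpleGraph V} {x y : V}

lemma Walk.IsPath.getVert_pred_ne_getVert_succ {p : D.Walk x y} (hp : p.IsPath) {i : ℕ}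
    (hi : i < p.length) : p.getVert (i - 1) ≠ p.getVert (i + 1) := fun h => by
  have := hp.getVert_injOn (by simp only [Set.mem_ofPred_eq]; omega)
    (by simp only [Set.mem_ofPred_eq]; omega) h
  omega

lemma Walk.adj_getVert_pred (p : D.Walk x y) {i : ℕ} (hi : 0 < i) (hil : i ≤ p.length) :
    D.Adj (p.getVert i) (p.getVert (i - 1)) := by
  have := p.adj_getVert_succ (i := i - 1) (by omega)
  rw [Nat.sub_add_cancel hi] at this
  exact this.symm

lemma eq_or_eq_of_encard_neighborSet_le_two {a b c d : V} (hdeg : (D.neighborSet a).encard ≤ 2)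
    (hcd : c ≠ d) (hc : D.Adj a c) (hd : D.Adj a d) (hb : D.Adj a b) : b = c ∨ b = d := by
  by_contra! h
  have hsub : ({b, c, d} : Set V) ⊆ D.neighborSet a := by
    simp [Set.insert_subset_iff, hb, hc, hd]
  have := (Set.encard_le_encard hsub).trans hdeg
  rw [Set.encard_insert_of_notMem (by simp [h.1, h.2]), Set.encard_pair hcd] at this
  norm_num at this

lemma Walk.IsPath.mem_support_of_adj {p : D.Walk x y} (hp : p.IsPath) (hxy : x ≠ y)
    (hx : (D.neighborSet x).Subsingleton) (hy : (D.neighborSet y).Subsingleton)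
    (hdeg : ∀ t, (D.neighborSet t).encard ≤ 2) {a b : V} (ha : a ∈ p.support)
    (hab : D.Adj a b) : b ∈ p.support := by
  obtain ⟨i, rfl, hi⟩ := Walk.mem_support_iff_exists_getVert.mp ha
  have hlen : 0 < p.length := by
    by_contra! h
    exact hxy (by simpa [Nat.le_zero.mp h] using p.getVert_length)
  rcases i.eq_zero_or_pos with rfl | hi0
  · rw [p.getVert_zero] at hab
    have hsucc := p.adj_getVert_succ hlen
    rw [p.getVert_zero] at hsucc
    exact hx hab hsucc ▸ p.getVert_mem_support _
  rcases hi.lt_or_eq with hil | rfl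
  · obtain h | h := eq_or_eq_of_encard_neighborSet_le_two (hdeg _)
      (hp.getVert_pred_ne_getVert_succ hil) (p.adj_getVert_pred hi0 hi)
      (p.adj_getVert_succ hil) hab <;>
    exact h ▸ p.getVert_mem_support _
  · rw [p.getVert_length] at hab
    have hpred := p.adj_getVert_pred hi0 le_rfl
    rw [p.getVert_length] at hpred
    exact hy hab hpred ▸ p.getVert_mem_support _

/-- A connected graph of maximum degree two is a path or a cycle, so at most two of its vertices
have degree at most one. -/
lemma Reachable.not_reachable_of_subsingleton_neighborSet
    (hdeg : ∀ t, (D.neighborSet t).encard ≤ 2) {z : V} (hxy : x ≠ y) (hzx : z ≠ x)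
    (hzy : z ≠ y)
    (hx : (D.neighborSet x).Subsingleton) (hy : (D.neighborSet y).Subsingleton)
    (hz : (D.neighborSet z).Subsingleton) (h : D.Reachable x y) : ¬D.Reachable x z := by
  classical
  rintro ⟨q⟩
  obtain ⟨p, hp⟩ := h.some.toPath
  have hclosed : ∀ {s t : V} (q : D.Walk s t), s ∈ p.support → t ∈ p.support := by
    intro s t q
    induction q with
    | nil => exact id
    | cons hst _ ih => exact fun hs => ih (hp.mem_support_of_adj hxy hx hy hdeg hs hst)
  obtain ⟨i, rfl, hi⟩ := Walk.mem_support_iff_exists_getVert.mp (hclosed q p.start_mem_support)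
  have hi0 : 0 < i := Nat.pos_of_ne_zero (by rintro rfl; exact hzx p.getVert_zero)
  have hil : i < p.length := hi.lt_of_ne (by rintro rfl; exact hzy p.getVert_length)
  exact hp.getVert_pred_ne_getVert_succ hil
    (hz (p.adj_getVert_pred hi0 hi) (p.adj_getVert_succ hil))

end MaxDegreeTwo

/-- Colours are assigned to all of `Sym2 V`; only the values on edges matter. -/
structure EdgeColoring (G : SimpleGraph V) (α : Type*) where
  color : Sym2 V → α
  valid : ∀ ⦃x y z⦄, G.Adj x y → G.Adj x z → y ≠ z → color s(x, y) ≠ color s(x, z)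

namespace EdgeColoring

variable {G : SimpleGraph V} {α : Type*} (φ : EdgeColoring G α) {x y : V} {a b c : α}

def IsMissing (x : V) (c : α) : Prop := ∀ ⦃y⦄, G.Adj x y → φ.color s(x, y) ≠ c

def toLineGraphColoring : G.lineGraph.Coloring α :=
  Coloring.mk (fun e => φ.color e) fun {e₁ e₂} h => by
    obtain ⟨hne, x, hx₁, hx₂⟩ := lineGraph_adj_iff_exists.mp h
    obtain ⟨e₁, he₁⟩ := e₁
    obtain ⟨e₂, he₂⟩ := e₂
    obtain ⟨y, rfl⟩ := Sym2.mem_iff_exists.mp hx₁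
    obtain ⟨z, rfl⟩ := Sym2.mem_iff_exists.mp hx₂
    exact φ.valid he₁ he₂ fun h => hne (by simp [h])

lemma chromaticIndex_le [Fintype α] (φ : EdgeColoring G α) :
    G.chromaticIndex ≤ Fintype.card α :=
  φ.toLineGraphColoring.colorable.chromaticNumber_le

open Classical in
noncomputable def ofLineGraphColoring [Nonempty α] (C : G.lineGraph.Coloring α) :
    EdgeColoring G α where
  color e := if h : e ∈ G.edgeSet then C ⟨e, h⟩ else Classical.arbitrary α
  valid x y z hxy hxz hyz := by
    rw [dif_pos (G.mem_edgeSet.mpr hxy), dif_pos (G.mem_edgeSet.mpr hxz)]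
    refine C.valid (lineGraph_adj_iff_exists.mpr ⟨?_, x, by simp, by simp⟩)
    exact fun h => hyz (Sym2.congr_right.mp (congrArg Subtype.val h))

lemma nonempty_of_chromaticIndex_le {n : ℕ} [NeZero n]
    (h : G.chromaticIndex ≤ n) : Nonempty (EdgeColoring G (Fin n)) :=
  ⟨ofLineGraphColoring (chromaticNumber_le_iff_colorable.mp h).some⟩

section Missing

variable [Fintype α] [DecidableEq α] (x : V) [Fintype (G.neighborSet x)]

def missingColors : Finset α := ((G.neighborFinset x).image fun y => φ.color s(x, y))ᶜ

variable {φ x} in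
lemma mem_missingColors : c ∈ φ.missingColors x ↔ φ.IsMissing x c := by
  simp [missingColors, IsMissing]

lemma card_missingColors_add_degree : #(φ.missingColors x) + G.degree x = Fintype.card α := by
  rw [missingColors, ← card_neighborFinset_eq_degree,
    ← card_image_of_injOn (f := fun y => φ.color s(x, y)) fun y hy y' hy' h => ?_,
    card_compl_add_card]
  by_contra hne
  exact φ.valid (by simpa using hy) (by simpa using hy') hne h

end Missing

variable {u v : V}

open Classical in
noncomputable def extend (φ : EdgeColoring (G.deleteEdges {s(u, v)}) α) (hu : φ.IsMissing u c)
    (hv : φ.IsMissing v c) : EdgeColoring G α where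
  color e := if e = s(u, v) then c else φ.color e
  valid x y z hxy hxz hyz := by
    have hH : ∀ {t}, G.Adj x t → s(x, t) ≠ s(u, v) → (G.deleteEdges {s(u, v)}).Adj x t :=
      fun h hne => (deleteEdges_adj).mpr ⟨h, hne⟩
    have hmiss : ∀ {t}, s(x, t) = s(u, v) → φ.IsMissing x c := fun h => by
      rcases Sym2.mem_iff.mp (h ▸ Sym2.mem_mk_left x _) with rfl | rfl
      exacts [hu, hv]
    split_ifs with h₁ h₂ h₂
    · exact absurd (Sym2.congr_right.mp (h₁.trans h₂.symm)) hyz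
    · exact (hmiss h₁ (hH hxz h₂)).symm
    · exact hmiss h₂ (hH hxy h₁)
    · exact φ.valid (hH hxy h₁) (hH hxz h₂) hyz

def kempeGraph (a b : α) : SimpleGraph V where
  Adj x y := G.Adj x y ∧ (φ.color s(x, y) = a ∨ φ.color s(x, y) = b)
  symm := ⟨fun _ _ h => ⟨h.1.symm, by rw [Sym2.eq_swap]; exact h.2⟩⟩
  loopless := ⟨fun _ h => h.1.ne rfl⟩

lemma encard_neighborSet_kempeGraph_le {s : Set α}
    (hs : ∀ y, (φ.kempeGraph a b).Adj x y → φ.color s(x, y) ∈ s) :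
    ((φ.kempeGraph a b).neighborSet x).encard ≤ s.encard :=
  Set.encard_le_encard_of_injOn hs fun y hy y' hy' h => by
    by_contra hne
    exact φ.valid hy.1 hy'.1 hne h

lemma encard_neighborSet_kempeGraph_le_two : ((φ.kempeGraph a b).neighborSet x).encard ≤ 2 :=
  (φ.encard_neighborSet_kempeGraph_le (s := {a, b}) fun _ h => h.2).trans
    ((Set.encard_insert_le _ _).trans (by norm_num))

lemma subsingleton_neighborSet_kempeGraph (hx : φ.IsMissing x c) (hc : c = a ∨ c = b) :
    ((φ.kempeGraph a b).neighborSet x).Subsingleton := by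
  rw [← Set.encard_le_one_iff_subsingleton]
  rcases hc with rfl | rfl
  · exact (φ.encard_neighborSet_kempeGraph_le (s := {b}) fun y h =>
      h.2.resolve_left (hx h.1)).trans (by simp)
  · exact (φ.encard_neighborSet_kempeGraph_le (s := {a}) fun y h =>
      h.2.resolve_right (hx h.1)).trans (by simp)

variable [DecidableEq α]

open Classical in
/-- Swapping `a` and `b` on every edge with an endpoint reachable from `p` is the Kempe change
along the `(a, b)`-chain through `p`: the swap fixes all other colours. -/
noncomputable def kempeSwapColor (a b : α) (p : V) (e : Sym2 V) : α :=
  if ∃ x ∈ e, (φ.kempeGraph a b).Reachable p x then Equiv.swap a b (φ.color e) else φ.color e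

open Classical in
lemma kempeSwapColor_mk {p : V} (hxy : G.Adj x y) :
    φ.kempeSwapColor a b p s(x, y) = if (φ.kempeGraph a b).Reachable p x
      then Equiv.swap a b (φ.color s(x, y)) else φ.color s(x, y) := by
  by_cases hx : (φ.kempeGraph a b).Reachable p x
  · rw [if_pos hx, kempeSwapColor, if_pos ⟨x, Sym2.mem_mk_left x y, hx⟩]
  rw [if_neg hx, kempeSwapColor]
  split_ifs with h
  · obtain ⟨t, ht, hpt⟩ := h
    have hy : (φ.kempeGraph a b).Reachable p y := by
      rcases Sym2.mem_iff.mp ht with rfl | rfl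
      exacts [absurd hpt hx, hpt]
    have hxy_ab : ¬(φ.color s(x, y) = a ∨ φ.color s(x, y) = b) := fun h =>
      hx (hy.trans (Adj.reachable ⟨hxy.symm, by rw [Sym2.eq_swap]; exact h⟩))
    push Not at hxy_ab
    exact Equiv.swap_apply_of_ne_of_ne hxy_ab.1 hxy_ab.2
  · rfl

noncomputable def kempeSwap (a b : α) (p : V) : EdgeColoring G α where
  color := φ.kempeSwapColor a b p
  valid x y z hxy hxz hyz := by
    rw [φ.kempeSwapColor_mk hxy, φ.kempeSwapColor_mk hxz]
    split_ifs
    · exact (Equiv.injective _).ne (φ.valid hxy hxz hyz)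
    · exact φ.valid hxy hxz hyz

variable {p : V}

lemma kempeSwap_color_of_reachable (hxy : G.Adj x y) (hx : (φ.kempeGraph a b).Reachable p x) :
    (φ.kempeSwap a b p).color s(x, y) = Equiv.swap a b (φ.color s(x, y)) :=
  (φ.kempeSwapColor_mk hxy).trans (if_pos hx)

lemma kempeSwap_color_of_not_reachable (hxy : G.Adj x y)
    (hx : ¬(φ.kempeGraph a b).Reachable p x) :
    (φ.kempeSwap a b p).color s(x, y) = φ.color s(x, y) :=
  (φ.kempeSwapColor_mk hxy).trans (if_neg hx)

variable {φ}

lemma IsMissing.kempeSwap_of_reachable (h : φ.IsMissing x c)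
    (hx : (φ.kempeGraph a b).Reachable p x) :
    (φ.kempeSwap a b p).IsMissing x (Equiv.swap a b c) :=
  fun _ hy => by
    rw [φ.kempeSwap_color_of_reachable hy hx]
    exact (Equiv.injective _).ne (h hy)

lemma IsMissing.kempeSwap_of_not_reachable (h : φ.IsMissing x c)
    (hx : ¬(φ.kempeGraph a b).Reachable p x) : (φ.kempeSwap a b p).IsMissing x c :=
  fun _ hy => by
    rw [φ.kempeSwap_color_of_not_reachable hy hx]
    exact h hy

lemma IsMissing.kempeSwap_left (h : φ.IsMissing p a) : (φ.kempeSwap a b p).IsMissing p b := by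
  simpa using h.kempeSwap_of_reachable (a := a) (b := b) Reachable.rfl

lemma IsMissing.kempeSwap_right (h : φ.IsMissing p b) : (φ.kempeSwap a b p).IsMissing p a := by
  simpa using h.kempeSwap_of_reachable (a := a) (b := b) Reachable.rfl

lemma IsMissing.kempeSwap_of_ne (h : φ.IsMissing x c) (ha : c ≠ a) (hb : c ≠ b) :
    (φ.kempeSwap a b p).IsMissing x c := by
  by_cases hx : (φ.kempeGraph a b).Reachable p x
  · simpa [Equiv.swap_apply_of_ne_of_ne ha hb] using h.kempeSwap_of_reachable hx
  · exact h.kempeSwap_of_not_reachable hx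

end EdgeColoring

/-- The situation in `H = G - uv` for an edge `uv` of a `Δ`-critical graph `G` with
`d(u) + d(v) = Δ + 2`, coloured with `Δ` colours. -/
structure ComplementaryMissing (H : SimpleGraph V) (α : Type*) (u v : V) : Prop where
  exists_isMissing_left : ∀ φ : EdgeColoring H α, ∃ c, φ.IsMissing u c
  isMissing_right_iff : ∀ (φ : EdgeColoring H α) c, φ.IsMissing v c ↔ ¬φ.IsMissing u c

namespace ComplementaryMissing

variable {H : SimpleGraph V} {α : Type*} {u v w z : V} {φ : EdgeColoring H α} {a b c : α}

lemma isMissing_right_color (hP : ComplementaryMissing H α u v) (huw : H.Adj u w) :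
    φ.IsMissing v (φ.color s(u, w)) :=
  (hP.isMissing_right_iff φ _).mpr fun h => h huw rfl

variable [DecidableEq α]

lemma reachable (hP : ComplementaryMissing H α u v) (ha : φ.IsMissing u a)
    (hb : φ.IsMissing v b) : (φ.kempeGraph a b).Reachable u v := by
  by_contra huv
  exact (hP.isMissing_right_iff _ b).mp (hb.kempeSwap_of_not_reachable huv) ha.kempeSwap_left

/-- `u` and `v` are the two ends of their `(a, b)`-chain, so `z` cannot be a third end. -/
lemma not_reachable (hP : ComplementaryMissing H α u v) (ha : φ.IsMissing u a)
    (hb : φ.IsMissing v b) (hzu : z ≠ u) (hzv : z ≠ v) (hz : φ.IsMissing z c)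
    (hc : c = a ∨ c = b) : ¬(φ.kempeGraph a b).Reachable u z :=
  (hP.reachable ha hb).not_reachable_of_subsingleton_neighborSet
    (fun _ => φ.encard_neighborSet_kempeGraph_le_two)
    (by rintro rfl; exact (hP.isMissing_right_iff φ b).mp hb hb) hzu hzv
    (φ.subsingleton_neighborSet_kempeGraph ha (Or.inl rfl))
    (φ.subsingleton_neighborSet_kempeGraph hb (Or.inr rfl))
    (φ.subsingleton_neighborSet_kempeGraph hz hc)

lemma not_isMissing_color_of_color_eq (hP : ComplementaryMissing H α u v) (huw : H.Adj u w)
    (hwz : H.Adj w z) (hzu : z ≠ u) (hzv : z ≠ v) (ha : φ.IsMissing u a)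
    (hwza : φ.color s(w, z) = a) : ¬φ.IsMissing z (φ.color s(u, w)) := fun hz =>
  hP.not_reachable ha (hP.isMissing_right_color huw) hzu hzv hz (Or.inr rfl)
    (Adj.reachable (G := φ.kempeGraph a _) ⟨huw, Or.inr rfl⟩ |>.trans
      (Adj.reachable ⟨hwz, Or.inl hwza⟩))

/-- If `θ = φ(wz)` is missing at `u`, use the `(θ, β)`-chain `u w z`; otherwise the Kempe change
along the `(a, θ)`-chain at `z` recolours `wz` by `a`, and the `(a, β)`-chain `u w z` appears. -/
lemma not_isMissing_color_of_isMissing_left (hP : ComplementaryMissing H α u v)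
    (huw : H.Adj u w) (hwz : H.Adj w z) (hzu : z ≠ u) (hzv : z ≠ v) (ha : φ.IsMissing u a)
    (hza : φ.IsMissing z a) : ¬φ.IsMissing z (φ.color s(u, w)) := by
  intro hzβ
  set θ := φ.color s(w, z)
  by_cases huθ : φ.IsMissing u θ
  · exact hP.not_isMissing_color_of_color_eq huw hwz hzu hzv huθ rfl hzβ
  have hvθ : φ.IsMissing v θ := (hP.isMissing_right_iff φ θ).mpr huθ
  have hβa : φ.color s(u, w) ≠ a := ha huw
  have hβθ : φ.color s(u, w) ≠ θ := by
    rw [Sym2.eq_swap]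
    exact φ.valid huw.symm hwz (Ne.symm hzu)
  have hzu' : ¬(φ.kempeGraph a θ).Reachable z u := fun h =>
    hP.not_reachable ha hvθ hzu hzv hza (Or.inl rfl) h.symm
  set ψ := φ.kempeSwap a θ z
  have huw' : ψ.color s(u, w) = φ.color s(u, w) :=
    φ.kempeSwap_color_of_not_reachable huw hzu'
  have hwz' : ψ.color s(w, z) = a := by
    rw [Sym2.eq_swap, φ.kempeSwap_color_of_reachable hwz.symm Reachable.rfl, Sym2.eq_swap,
      Equiv.swap_apply_right]
  have hzβ' : ψ.IsMissing z (ψ.color s(u, w)) := huw' ▸ hzβ.kempeSwap_of_ne hβa hβθ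
  exact hP.not_isMissing_color_of_color_eq huw hwz hzu hzv (ha.kempeSwap_of_not_reachable hzu')
    hwz' hzβ'

lemma not_isMissing_color_of_isMissing (hP : ComplementaryMissing H α u v)
    (huw : H.Adj u w) (hwz : H.Adj w z) (hzu : z ≠ u) (hzv : z ≠ v) (hzc : φ.IsMissing z c)
    (hc : c ≠ φ.color s(u, w)) : ¬φ.IsMissing z (φ.color s(u, w)) := by
  intro hzβ
  by_cases huc : φ.IsMissing u c
  · exact hP.not_isMissing_color_of_isMissing_left huw hwz hzu hzv huc hzc hzβ
  obtain ⟨a, ha⟩ := hP.exists_isMissing_left φ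
  have hvc : φ.IsMissing v c := (hP.isMissing_right_iff φ c).mpr huc
  have hzu' : ¬(φ.kempeGraph a c).Reachable z u := fun h =>
    hP.not_reachable ha hvc hzu hzv hzc (Or.inr rfl) h.symm
  set ψ := φ.kempeSwap a c z
  have huw' : ψ.color s(u, w) = φ.color s(u, w) :=
    φ.kempeSwap_color_of_not_reachable huw hzu'
  have hzβ' : ψ.IsMissing z (ψ.color s(u, w)) := huw' ▸ hzβ.kempeSwap_of_ne (ha huw) hc.symm
  exact hP.not_isMissing_color_of_isMissing_left huw hwz hzu hzv
    (ha.kempeSwap_of_not_reachable hzu') hzc.kempeSwap_right hzβ'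

lemma eq_of_isMissing_left (hP : ComplementaryMissing H α u v) (huw : H.Adj u w)
    (hwz : H.Adj w z) (hzu : z ≠ u) (hzv : z ≠ v) (ha : φ.IsMissing u a)
    (hza : φ.IsMissing z a) (hzc : φ.IsMissing z c) : c = a := by
  by_contra hca
  by_cases hcβ : c = φ.color s(u, w)
  · subst hcβ
    exact hP.not_isMissing_color_of_isMissing huw hwz hzu hzv hza (fun h => ha huw h.symm) hzc
  have hzu' : ¬(φ.kempeGraph a (φ.color s(u, w))).Reachable z u := fun h =>
    hP.not_reachable ha (hP.isMissing_right_color huw) hzu hzv hza (Or.inl rfl) h.symm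
  have huw' : (φ.kempeSwap a _ z).color s(u, w) = φ.color s(u, w) :=
    φ.kempeSwap_color_of_not_reachable huw hzu'
  refine hP.not_isMissing_color_of_isMissing huw hwz hzu hzv (hzc.kempeSwap_of_ne hca hcβ)
    (huw' ▸ hcβ) ?_
  rw [huw']
  exact hza.kempeSwap_left

theorem eq_of_isMissing (hP : ComplementaryMissing H α u v) (huw : H.Adj u w)
    (hwz : H.Adj w z) (hzu : z ≠ u) (hzv : z ≠ v) {c₁ c₂ : α} (h₁ : φ.IsMissing z c₁)
    (h₂ : φ.IsMissing z c₂) : c₁ = c₂ := by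
  by_cases hu₁ : φ.IsMissing u c₁
  · exact (hP.eq_of_isMissing_left huw hwz hzu hzv hu₁ h₁ h₂).symm
  by_cases hu₂ : φ.IsMissing u c₂
  · exact hP.eq_of_isMissing_left huw hwz hzu hzv hu₂ h₂ h₁
  by_contra h₁₂
  obtain ⟨a, ha⟩ := hP.exists_isMissing_left φ
  have hv₁ : φ.IsMissing v c₁ := (hP.isMissing_right_iff φ c₁).mpr hu₁
  have hzu' : ¬(φ.kempeGraph a c₁).Reachable z u := fun h =>
    hP.not_reachable ha hv₁ hzu hzv h₁ (Or.inr rfl) h.symm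
  have h₂' : (φ.kempeSwap a c₁ z).IsMissing z c₂ :=
    h₂.kempeSwap_of_ne (fun h => hu₂ (h ▸ ha)) (Ne.symm h₁₂)
  exact hu₂ (hP.eq_of_isMissing_left huw hwz hzu hzv (ha.kempeSwap_of_not_reachable hzu')
    h₁.kempeSwap_right h₂' ▸ ha)

end ComplementaryMissing

section Critical

open EdgeColoring

variable [Fintype V] {G : SimpleGraph V} [DecidableRel G.Adj] {u v w z : V}

lemma degree_deleteEdges_singleton_add_one [DecidableEq V] (huv : G.Adj u v) :
    (G.deleteEdges {s(u, v)}).degree u + 1 = G.degree u := by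
  have : (G.deleteEdges {s(u, v)}).neighborFinset u = (G.neighborFinset u).erase v := by
    ext y
    simp [huv.ne, and_comm]
  rw [← card_neighborFinset_eq_degree, ← card_neighborFinset_eq_degree, this,
    card_erase_add_one (by simpa using huv)]

lemma IsDeltaCritical.nonempty_edgeColoring_deleteEdges (hG : G.IsDeltaCritical)
    (huv : G.Adj u v) : Nonempty (EdgeColoring (G.deleteEdges {s(u, v)}) (Fin G.maxDegree)) := by
  have : NeZero G.maxDegree := ⟨(((G.degree_pos_iff_exists_adj u).mpr ⟨v, huv⟩).trans_le
    (G.degree_le_maxDegree u)).ne'⟩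
  have h := hG.2.2 s(u, v) huv
  rw [hG.2.1, ENat.lt_add_one_iff (ENat.natCast_ne_top _)] at h
  exact EdgeColoring.nonempty_of_chromaticIndex_le h

lemma IsDeltaCritical.not_isMissing_of_isMissing (hG : G.IsDeltaCritical)
    {φ : EdgeColoring (G.deleteEdges {s(u, v)}) (Fin G.maxDegree)} {c : Fin G.maxDegree}
    (hu : φ.IsMissing u c) : ¬φ.IsMissing v c := fun hv => by
  have h := (φ.extend hu hv).chromaticIndex_le
  rw [hG.2.1, Fintype.card_fin] at h
  norm_cast at h
  omega

lemma IsDeltaCritical.complementaryMissing (hG : G.IsDeltaCritical) (huv : G.Adj u v)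
    (hsum : G.degree u + G.degree v = G.maxDegree + 2) :
    ComplementaryMissing (G.deleteEdges {s(u, v)}) (Fin G.maxDegree) u v := by
  classical
  have hdu := degree_deleteEdges_singleton_add_one huv
  have hdv := degree_deleteEdges_singleton_add_one huv.symm
  rw [Sym2.eq_swap] at hdv
  have hΔu := G.degree_le_maxDegree u
  refine ⟨fun φ => ?_, fun φ c =>
    ⟨fun hv hu => hG.not_isMissing_of_isMissing hu hv, fun hu => ?_⟩⟩
  · have hcard := φ.card_missingColors_add_degree u
    rw [Fintype.card_fin] at hcard
    obtain ⟨c, hc⟩ := card_pos.mp (by omega : 0 < #(φ.missingColors u))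
    exact ⟨c, mem_missingColors.mp hc⟩
  have hdisj : Disjoint (φ.missingColors u) (φ.missingColors v) := Finset.disjoint_left.mpr
    fun c hcu hcv => hG.not_isMissing_of_isMissing (mem_missingColors.mp hcu)
      (mem_missingColors.mp hcv)
  have hunion : φ.missingColors u ∪ φ.missingColors v = univ := by
    apply eq_univ_of_card
    have hcu := φ.card_missingColors_add_degree u
    have hcv := φ.card_missingColors_add_degree v
    rw [card_union_of_disjoint hdisj]
    simp only [Fintype.card_fin] at *
    omega
  have hc := hunion ▸ mem_univ c
  exact mem_missingColors.mp ((mem_union.mp hc).resolve_left (hu ∘ mem_missingColors.mp))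

lemma IsDeltaCritical.maxDegree_sub_one_le_degree (hG : G.IsDeltaCritical) (huv : G.Adj u v)
    (hsum : G.degree u + G.degree v = G.maxDegree + 2) (huw : G.Adj u w) (hwv : w ≠ v)
    (hwz : G.Adj w z) (hzu : z ≠ u) (hzv : z ≠ v) : G.maxDegree - 1 ≤ G.degree z := by
  classical
  by_contra! hz
  obtain ⟨φ⟩ := hG.nonempty_edgeColoring_deleteEdges huv
  have hHuw : (G.deleteEdges {s(u, v)}).Adj u w := by simp [huw, hwv, huv.ne]
  have hHwz : (G.deleteEdges {s(u, v)}).Adj w z := by simp [hwz, hwv, huw.ne']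
  have hmiss : 1 < #(φ.missingColors z) := by
    have hcard := φ.card_missingColors_add_degree z
    have hdz := degree_le_of_le (v := z) (G.deleteEdges_le {s(u, v)})
    rw [Fintype.card_fin] at hcard
    omega
  obtain ⟨c₁, h₁, c₂, h₂, hne⟩ := one_lt_card.mp hmiss
  exact hne ((hG.complementaryMissing huv hsum).eq_of_isMissing hHuw hHwz hzu hzv
    (mem_missingColors.mp h₁) (mem_missingColors.mp h₂))

end Critical

end SimpleGraph

theorem critical_second_neighbors_degree [Fintype V] (G : SimpleGraph V) [DecidableRel G.Adj]
    (hG : G.IsDeltaCritical) {u v : V} (huv : G.Adj u v)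
    (hsum : G.degree u + G.degree v = G.maxDegree + 2) :
    ∀ z ∈ G.setNbhd (G.setNbhd {u, v}), z ≠ u → z ≠ v →
      G.maxDegree - 1 ≤ G.degree z := by
  rintro z ⟨-, w, ⟨hw, t, ht, htw⟩, hwz⟩ hzu hzv
  have hwu : w ≠ u := fun h => hw (h ▸ Set.mem_insert u {v})
  have hwv : w ≠ v := fun h => hw (h ▸ Set.mem_insert_of_mem u rfl)
  rcases ht with rfl | rfl
  · exact hG.maxDegree_sub_one_le_degree huv hsum htw hwv hwz hzu hzv
  · exact hG.maxDegree_sub_one_le_degree huv.symm (by omega) htw hwu hwz hzv hzu
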